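/- Let Γ be a countable group and μ an irreducible probability measure on Γ with period d, and let Γ₀ = ⋃_{k≥1} S_μ^{-k} S_μ^{k}. If x₀ ∈ S_μ and x₀^k ∈ Γ₀ for some k ∈ ℕ, then d divides k. -/
import Mathlib


open Filter Topology
open scoped Pointwise Classical

/-- The `n`-th convolution power of a (probability) function `μ` on a group. -/
noncomputable def convPow {G : Type*} [Group G] (μ : G → ℝ) : ℕ → G → ℝ
  | 0 => fun x => if x = 1 then 1 else 0
  | n + 1 => fun x => ∑' y : G, μ y * convPow μ n (y⁻¹ * x)

/-- The support `S_μ = {x : μ(x) > 0}`. -/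
def msupp {G : Type*} [Group G] (μ : G → ℝ) : Set G := {g : G | 0 < μ g}

/-- `Γ₀ = ⋃_{k ≥ 1} S_μ^{-k} S_μ^{k}`. -/
def Gamma0 {G : Type*} [Group G] (μ : G → ℝ) : Set G :=
  ⋃ k ≥ 1, (msupp μ ^ k)⁻¹ * msupp μ ^ k

/-- `μ` is a probability measure on the countable group `G`. -/
def IsProbMeas {G : Type*} [Group G] (μ : G → ℝ) : Prop :=
  (∀ x, 0 ≤ μ x) ∧ ∑' x : G, μ x = 1

/-- Irreducibility: the semigroup generated by the support is the whole group,
`⋃_{n ≥ 1} S_μ^n = Γ`. -/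
def IsIrreducibleMeas {G : Type*} [Group G] (μ : G → ℝ) : Prop :=
  ∀ x : G, ∃ n : ℕ, 0 < n ∧ x ∈ msupp μ ^ n

/-- `d` is the period of `μ`, i.e. `d = gcd {n ∈ ℕ : μ⁽ⁿ⁾(e) > 0}`, characterized by:
`d` divides every element of the set, and every common divisor of the set divides `d`. -/
def IsPeriodOf {G : Type*} [Group G] (μ : G → ℝ) (d : ℕ) : Prop :=
  (∀ n : ℕ, 0 < n → 0 < convPow μ n 1 → d ∣ n) ∧
  (∀ c : ℕ, (∀ n : ℕ, 0 < n → 0 < convPow μ n 1 → c ∣ n) → c ∣ d)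


lemma convPow_nonneg {G : Type*} [Group G] {μ : G → ℝ} (h0 : ∀ x, 0 ≤ μ x) :
    ∀ n x, 0 ≤ convPow μ n x := by
  intro n
  induction n with
  | zero => intro x; simp only [convPow]; positivity
  | succ n ih =>
    intro x
    simp only [convPow]
    exact tsum_nonneg fun y => mul_nonneg (h0 y) (ih _)

lemma convPow_le_one {G : Type*} [Group G] {μ : G → ℝ} (h0 : ∀ x, 0 ≤ μ x)
    (h1 : ∑' x : G, μ x = 1) : ∀ n x, convPow μ n x ≤ 1 := by
  have hsum : Summable μ := by
    by_contra h
    rw [tsum_eq_zero_of_not_summable h] at h1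
    norm_num at h1
  intro n
  induction n with
  | zero => intro x; simp only [convPow]; split <;> norm_num
  | succ n ih =>
    intro x
    simp only [convPow]
    calc ∑' y : G, μ y * convPow μ n (y⁻¹ * x) ≤ ∑' y : G, μ y := by
          apply Summable.tsum_le_tsum _ _ hsum
          · intro y
            nlinarith [h0 y, convPow_nonneg h0 n (y⁻¹ * x), ih (y⁻¹ * x)]
          · apply hsum.of_nonneg_of_le
              (fun y => mul_nonneg (h0 y) (convPow_nonneg h0 n _))
            intro y
            nlinarith [h0 y, convPow_nonneg h0 n (y⁻¹ * x), ih (y⁻¹ * x)]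
      _ = 1 := h1

lemma convPow_pos {G : Type*} [Group G] {μ : G → ℝ} (h0 : ∀ x, 0 ≤ μ x)
    (h1 : ∑' x : G, μ x = 1) : ∀ n x, x ∈ msupp μ ^ n → 0 < convPow μ n x := by
  have hsum : Summable μ := by
    by_contra h
    rw [tsum_eq_zero_of_not_summable h] at h1
    norm_num at h1
  intro n
  induction n with
  | zero =>
    intro x hx
    simp only [pow_zero, Set.mem_one] at hx
    simp [convPow, hx]
  | succ n ih =>
    intro x hx
    rw [pow_succ'] at hx
    obtain ⟨y, hy, z, hz, rfl⟩ := hx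
    simp only [convPow]
    apply Summable.tsum_pos (i := y)
    · apply hsum.of_nonneg_of_le
        (fun w => mul_nonneg (h0 w) (convPow_nonneg h0 n _))
      intro w
      nlinarith [h0 w, convPow_nonneg h0 n (w⁻¹ * (y * z)),
        convPow_le_one h0 h1 n (w⁻¹ * (y * z))]
    · exact fun w => mul_nonneg (h0 w) (convPow_nonneg h0 n _)
    · have : y⁻¹ * (y * z) = z := by group
      rw [this]
      exact mul_pos hy (ih z hz)

/-- if `x₀ ∈ S_μ` and `x₀^k ∈ Γ₀`, then `d` divides `k`. -/
theorem stmt6 {G : Type*} [Group G] [Countable G] (μ : G → ℝ) (d : ℕ)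
    (hprob : IsProbMeas μ) (hirr : IsIrreducibleMeas μ) (hd : IsPeriodOf μ d)
    (x₀ : G) (hx₀ : x₀ ∈ msupp μ) (k : ℕ) (hk : x₀ ^ k ∈ Gamma0 μ) :
    d ∣ k := by

  rcases Nat.eq_zero_or_pos k with rfl | hkpos
  · exact dvd_zero d
  obtain ⟨m, hm1, hmem⟩ : ∃ m, 1 ≤ m ∧ x₀ ^ k ∈ (msupp μ ^ m)⁻¹ * msupp μ ^ m := by
    simpa only [Gamma0, Set.mem_iUnion, exists_prop] using hk
  rw [Set.mem_mul] at hmem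
  obtain ⟨a', ha', b, hb, hab⟩ := hmem
  rw [Set.mem_inv] at ha'
  set a : G := a'⁻¹ with ha_def
  have ha : a ∈ msupp μ ^ m := ha'
  obtain ⟨n, hn, hbn⟩ := hirr b⁻¹
  have h0 := hprob.1
  have h1 := hprob.2
  -- 1 ∈ S^(m+n)
  have h1mem : (1 : G) ∈ msupp μ ^ (m + n) := by
    rw [pow_add]
    have := Set.mul_mem_mul hb hbn
    simpa using this
  have hd1 : d ∣ m + n :=
    hd.1 (m + n) (by omega) (convPow_pos h0 h1 _ _ h1mem)
  -- b = a * x₀^k ∈ S^(m+k)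
  have hbmk : b ∈ msupp μ ^ (m + k) := by
    have hxk : x₀ ^ k ∈ msupp μ ^ k := Set.pow_mem_pow hx₀
    have : a * x₀ ^ k ∈ msupp μ ^ m * msupp μ ^ k := Set.mul_mem_mul ha hxk
    rw [← pow_add] at this
    have hba : a * x₀ ^ k = b := by
      rw [ha_def, ← hab]; group
    rwa [hba] at this
  have h2mem : (1 : G) ∈ msupp μ ^ (m + k + n) := by
    rw [pow_add]
    have := Set.mul_mem_mul hbmk hbn
    simpa using this
  have hd2 : d ∣ m + k + n :=
    hd.1 (m + k + n) (by omega) (convPow_pos h0 h1 _ _ h2mem)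
  have : d ∣ (m + k + n) - (m + n) := Nat.dvd_sub hd2 hd1
  simpa [Nat.add_sub_cancel, show m + k + n - (m + n) = k by omega] using this
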